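/- arXiv:1606.02498 — 7 statements merged into one kernel-verified Lean document; each statement's English description precedes it below -/
import Mathlib

section
/- For every integer n ≥ 1 and every x ∈ ℝ, each of the five functions Q₁(n,x) = 4/n, Q₂(n,x) = 4(−1)^n/n, Q₃(n,x) = (4/n)cos(nπ/2), Q₄(n,x) = (4/n)sin(nπ/2), Q₅(n,x) = x satisfies the linearized symmetry condition of the difference equation u_{n+4} = (n/(n+4))·u_n, namely Q(n+4, (n/(n+4))·x) = (n/(n+4))·Q(n, x). -/
open Real

/-! Apart from `Q₅`, each `Q` is `(4/n)·p(n)` with `p` of period 4 in `n`, and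
`n/(n+4) · 4/n = 4/(n+4)`. -/

theorem four_div_mul_eq_of_periodic {K : Type*} [Field K] [CharZero K] {p : ℕ → K}
    (hp : Function.Periodic p 4) {n : ℕ} (hn : n ≠ 0) :
    4 / ((n : K) + 4) * p (n + 4) = (n : K) / ((n : K) + 4) * (4 / (n : K) * p n) := by
  rw [hp n, ← mul_assoc, div_mul_div_cancel₀' (Nat.cast_ne_zero.mpr hn)]

theorem Function.Periodic.comp_natCast_mul_pi_div_two {f : ℝ → ℝ}
    (hf : Function.Periodic f (2 * π)) :
    Function.Periodic (fun k : ℕ => f (k * π / 2)) 4 := by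
  intro k
  dsimp only
  rw [show ((k + 4 : ℕ) : ℝ) * π / 2 = k * π / 2 + 2 * π by push_cast; ring]
  exact hf _

theorem neg_one_pow_periodic_four : Function.Periodic (fun k : ℕ => (-1 : ℝ) ^ k) 4 := by
  intro k
  simp only [pow_add]
  norm_num

/-- For `n ≥ 1`, each of `Q₁(n,x)=4/n`, `Q₂(n,x)=4(-1)^n/n`, `Q₃(n,x)=(4/n)cos(nπ/2)`,
`Q₄(n,x)=(4/n)sin(nπ/2)`, `Q₅(n,x)=x` satisfies the linearized symmetry condition
`Q(n+4, (n/(n+4))·x) = (n/(n+4))·Q(n,x)` of `u_{n+4} = (n/(n+4))·u_n`. -/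
theorem stmt2 : ∀ n : ℕ, 1 ≤ n → ∀ x : ℝ,
    (4 / ((n : ℝ) + 4) = (n : ℝ) / ((n : ℝ) + 4) * (4 / (n : ℝ))) ∧
    (4 * (-1 : ℝ) ^ (n + 4) / ((n : ℝ) + 4) =
      (n : ℝ) / ((n : ℝ) + 4) * (4 * (-1 : ℝ) ^ n / (n : ℝ))) ∧
    (4 / ((n : ℝ) + 4) * Real.cos ((↑(n + 4) : ℝ) * π / 2) =
      (n : ℝ) / ((n : ℝ) + 4) * (4 / (n : ℝ) * Real.cos ((n : ℝ) * π / 2))) ∧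
    (4 / ((n : ℝ) + 4) * Real.sin ((↑(n + 4) : ℝ) * π / 2) =
      (n : ℝ) / ((n : ℝ) + 4) * (4 / (n : ℝ) * Real.sin ((n : ℝ) * π / 2))) ∧
    ((n : ℝ) / ((n : ℝ) + 4) * x = (n : ℝ) / ((n : ℝ) + 4) * x) := by
  intro n hn x
  have hn0 : n ≠ 0 := Nat.one_le_iff_ne_zero.mp hn
  refine ⟨(div_mul_div_cancel₀' (Nat.cast_ne_zero.mpr hn0) _ _).symm, ?_, ?_, ?_, rfl⟩
  · simp only [mul_div_right_comm (4 : ℝ)]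
    exact four_div_mul_eq_of_periodic neg_one_pow_periodic_four hn0
  · exact four_div_mul_eq_of_periodic cos_periodic.comp_natCast_mul_pi_div_two hn0
  · exact four_div_mul_eq_of_periodic sin_periodic.comp_natCast_mul_pi_div_two hn0
end

section
/- Define Q : (−1,1) → ℝ by Q(x) = (1/2)(x² − 1)·log((1 − x)/(1 + x)) (real logarithm). For all a, b ∈ (−1,1), setting ω = (a + b)/(a·b + 1) (note a·b + 1 > 0 and ω ∈ (−1,1)), one has Q(ω) = ((1 − b²)/(a·b + 1)²)·Q(a) + ((1 − a²)/(a·b + 1)²)·Q(b). In other words, Q(n,x) = (1/2)(x² − 1)·log((1−x)/(1+x)) is a characteristic of a Lie point symmetry of the difference equation u_{n+4} = (u_{n+1} + u_n)/(u_n·u_{n+1} + 1). -/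
/-!
The map `x ↦ (1 - x) / (1 + x)` turns `ω(a, b) = (a + b) / (ab + 1)` into a product, so
`log ((1 - ω) / (1 + ω))` is additive in `a` and `b`. Since moreover
`1 - ω² = (1 - a²)(1 - b²) / (ab + 1)²`, multiplying the additive identity by `(ω² - 1) / 2`
gives the symmetry condition.
-/

lemma one_add_mul_pos_of_mem_Ioo {a b : ℝ} (ha : a ∈ Set.Ioo (-1 : ℝ) 1)
    (hb : b ∈ Set.Ioo (-1 : ℝ) 1) : 0 < a * b + 1 := by
  obtain ⟨ha₁, ha₂⟩ := ha
  obtain ⟨hb₁, hb₂⟩ := hb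
  -- `(1 - a)(1 - b) + (1 + a)(1 + b) = 2 (ab + 1)`
  have hsub : 0 < (1 - a) * (1 - b) := mul_pos (by linarith) (by linarith)
  have hadd : 0 < (1 + a) * (1 + b) := mul_pos (by linarith) (by linarith)
  linarith

section Field

variable {K : Type*} [Field K] {a b : K}

lemma one_sub_div_div_one_add_div (h : a * b + 1 ≠ 0) :
    (1 - (a + b) / (a * b + 1)) / (1 + (a + b) / (a * b + 1)) =
      (1 - a) / (1 + a) * ((1 - b) / (1 + b)) := by
  have hsub : 1 - (a + b) / (a * b + 1) = (1 - a) * (1 - b) / (a * b + 1) := by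
    field_simp; ring
  have hadd : 1 + (a + b) / (a * b + 1) = (1 + a) * (1 + b) / (a * b + 1) := by
    field_simp; ring
  rw [hsub, hadd, div_div_div_cancel_right₀ h, mul_div_mul_comm]

lemma div_sq_sub_one (h : a * b + 1 ≠ 0) :
    ((a + b) / (a * b + 1)) ^ 2 - 1 = -((1 - a ^ 2) * (1 - b ^ 2)) / (a * b + 1) ^ 2 := by
  field_simp; ring

end Field

lemma one_sub_div_one_add_pos {x : ℝ} (hx : x ∈ Set.Ioo (-1 : ℝ) 1) :
    0 < (1 - x) / (1 + x) :=
  div_pos (sub_pos.2 hx.2) (by linarith [hx.1])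

/-- `Q(x) = (1/2)(x²−1)·log((1−x)/(1+x))` is a characteristic of a Lie point symmetry of
`u_{n+4} = (u_{n+1}+u_n)/(u_n u_{n+1}+1)`: for `a, b ∈ (−1,1)` and `ω = (a+b)/(ab+1)`,
`Q(ω) = ((1−b²)/(ab+1)²)·Q(a) + ((1−a²)/(ab+1)²)·Q(b)`. -/
theorem stmt4 (a b : ℝ) (ha : a ∈ Set.Ioo (-1 : ℝ) 1) (hb : b ∈ Set.Ioo (-1 : ℝ) 1) :
    (1 / 2) * (((a + b) / (a * b + 1)) ^ 2 - 1) *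
        Real.log ((1 - (a + b) / (a * b + 1)) / (1 + (a + b) / (a * b + 1))) =
      (1 - b ^ 2) / (a * b + 1) ^ 2 *
          ((1 / 2) * (a ^ 2 - 1) * Real.log ((1 - a) / (1 + a))) +
        (1 - a ^ 2) / (a * b + 1) ^ 2 *
          ((1 / 2) * (b ^ 2 - 1) * Real.log ((1 - b) / (1 + b))) := by
  have hd := (one_add_mul_pos_of_mem_Ioo ha hb).ne'
  rw [one_sub_div_div_one_add_div hd, div_sq_sub_one hd,
    Real.log_mul (one_sub_div_one_add_pos ha).ne' (one_sub_div_one_add_pos hb).ne']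
  field_simp
  ring
end

section
/- Let c : ℕ → ℝ be a sequence. The function Q(n,x) = c(n)(x² − 1) satisfies the linearized symmetry condition of the difference equation u_{n+4} = (u_{n+1} + u_n)/(u_n·u_{n+1} + 1), namely c(n+4)·(ω² − 1) = ((1 − b²)/(a·b + 1)²)·c(n)(a² − 1) + ((1 − a²)/(a·b + 1)²)·c(n+1)(b² − 1) with ω = (a + b)/(a·b + 1), for all n ∈ ℕ and all a, b ∈ ℝ with a·b + 1 ≠ 0, if and only if c satisfies the linear recurrence c(n+4) = c(n) + c(n+1) for all n ∈ ℕ. -/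
/-! Writing `ω = (a + b)/(ab + 1)`, one has `ω² - 1 = -(1 - a²)(1 - b²)/(ab + 1)²`, and both
terms on the right of the symmetry condition carry the same factor, so the condition at `(n, a, b)`
reads `(1 - a²)(1 - b²)(c(n+4) - c(n) - c(n+1)) = 0`. Taking `a = b = 0` gives the recurrence. -/

theorem linearized_symmetry_iff {K : Type*} [Field K] {a b p q r : K} (hab : a * b + 1 ≠ 0) :
    r * (((a + b) / (a * b + 1)) ^ 2 - 1) =
        (1 - b ^ 2) / (a * b + 1) ^ 2 * (p * (a ^ 2 - 1)) +
          (1 - a ^ 2) / (a * b + 1) ^ 2 * (q * (b ^ 2 - 1)) ↔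
      (1 - a ^ 2) * (1 - b ^ 2) * (r - (p + q)) = 0 := by
  have hdefect : r * (((a + b) / (a * b + 1)) ^ 2 - 1) -
      ((1 - b ^ 2) / (a * b + 1) ^ 2 * (p * (a ^ 2 - 1)) +
        (1 - a ^ 2) / (a * b + 1) ^ 2 * (q * (b ^ 2 - 1))) =
      -((1 - a ^ 2) * (1 - b ^ 2) * (r - (p + q)) / (a * b + 1) ^ 2) := by
    field_simp
    ring
  rw [← sub_eq_zero, hdefect, neg_eq_zero, div_eq_zero_iff, or_iff_left (pow_ne_zero 2 hab)]

/-- `Q(n,x) = c(n)(x²−1)` satisfies the linearized symmetry condition of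
`u_{n+4} = (u_{n+1}+u_n)/(u_n u_{n+1}+1)` iff `c(n+4) = c(n) + c(n+1)` for all `n`. -/
theorem stmt5 (c : ℕ → ℝ) :
    (∀ (n : ℕ) (a b : ℝ), a * b + 1 ≠ 0 →
        c (n + 4) * (((a + b) / (a * b + 1)) ^ 2 - 1) =
          (1 - b ^ 2) / (a * b + 1) ^ 2 * (c n * (a ^ 2 - 1)) +
            (1 - a ^ 2) / (a * b + 1) ^ 2 * (c (n + 1) * (b ^ 2 - 1))) ↔
      (∀ n : ℕ, c (n + 4) = c n + c (n + 1)) := by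
  constructor
  · intro h n
    have h₀ := (linearized_symmetry_iff (by norm_num)).1 (h n 0 0 (by norm_num))
    simpa [sub_eq_zero] using h₀
  · intro h n a b hab
    exact (linearized_symmetry_iff hab).2 (by rw [h n, sub_self, mul_zero])
end

section
/- Let Q : ℝ → ℝ be four times continuously differentiable on the open interval (−1,1). Then Q satisfies the ordinary differential equation (x² − 1)·Q⁗(x) + 4x·Q‴(x) = 0 for all x ∈ (−1,1) if and only if there exist constants c₁, c₂, c₃, c₄ ∈ ℝ such that Q(x) = c₁·[(2x² − 2)·log((1 − x)/(1 + x)) − 4x] + c₂ + c₃·x + c₄·x² for all x ∈ (−1,1). -/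
/-!
Multiplying by `x² - 1` makes the equation exact:
`((x² - 1)² Q‴)' = (x² - 1) ((x² - 1) Q⁗ + 4x Q‴)`, so on `(-1, 1)` it says precisely that
`(x² - 1)² Q‴` is constant, i.e. `Q‴ = c / (x² - 1)²`. The function
`(2x² - 2) log ((1 - x) / (1 + x)) - 4x` has third derivative `-16 / (x² - 1)²`, and a function
whose third derivative vanishes on an interval is a quadratic polynomial there.
-/

open Set

section

variable {s : Set ℝ}

theorem IsOpen.eqOn_iteratedDeriv_succ_of_hasDerivAt {n : ℕ} {f g g' : ℝ → ℝ} (hs : IsOpen s)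
    (hfg : EqOn (iteratedDeriv n f) g s) (hg : ∀ x ∈ s, HasDerivAt g (g' x) x) :
    EqOn (iteratedDeriv (n + 1) f) g' s := by
  intro x hx
  rw [iteratedDeriv_succ, (hfg.eventuallyEq_of_mem (hs.mem_nhds hx)).deriv_eq]
  exact (hg x hx).deriv

theorem IsOpen.hasDerivAt_iteratedDerivWithin {f : ℝ → ℝ} {n m : ℕ} (hs : IsOpen s)
    (hf : ContDiffOn ℝ n f s) (hmn : m < n) {x : ℝ} (hx : x ∈ s) :
    HasDerivAt (iteratedDerivWithin m f s) (iteratedDerivWithin (m + 1) f s x) x := by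
  rw [iteratedDerivWithin_succ, derivWithin_of_isOpen hs hx]
  have hd := hf.differentiableOn_iteratedDerivWithin (by exact_mod_cast hmn) hs.uniqueDiffOn x hx
  exact (hd.differentiableAt (hs.mem_nhds hx)).hasDerivAt

theorem hasDerivAt_linear (a b x : ℝ) : HasDerivAt (fun y => a + b * y) b x := by
  simpa using ((hasDerivAt_id x).const_mul b).const_add a

theorem hasDerivAt_quadratic (a b c x : ℝ) :
    HasDerivAt (fun y => a + b * y + c * y ^ 2) (b + 2 * c * x) x := by
  refine ((hasDerivAt_linear a b x).add ((hasDerivAt_pow 2 x).const_mul c)).congr_deriv ?_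
  norm_num
  ring

theorem IsOpen.iteratedDerivWithin_three_eq_zero_iff (hs : IsOpen s) (hs' : IsPreconnected s)
    {f : ℝ → ℝ} (hf : ContDiffOn ℝ 3 f s) :
    (∀ x ∈ s, iteratedDerivWithin 3 f s x = 0) ↔
      ∃ a b c : ℝ, ∀ x ∈ s, f x = a + b * x + c * x ^ 2 := by
  constructor
  · intro h
    have hf' : ContDiffOn ℝ 2 (deriv f) s := hf.deriv_of_isOpen hs (by norm_num)
    have hf'' : ContDiffOn ℝ 1 (deriv (deriv f)) s := hf'.deriv_of_isOpen hs (by norm_num)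
    obtain ⟨c₂, hc₂⟩ := hs.exists_is_const_of_deriv_eq_zero hs'
      (hf''.differentiableOn one_ne_zero)
      fun x hx => (iteratedDerivWithin_of_isOpen_eq_iterate hs hx).symm.trans (h x hx)
    obtain ⟨c₁, hc₁⟩ := hs.exists_eq_add_of_deriv_eq hs' (hf'.differentiableOn two_ne_zero)
      (fun x _ => (hasDerivAt_linear 0 c₂ x).differentiableAt.differentiableWithinAt)
      fun x hx => (hc₂ x hx).trans (hasDerivAt_linear 0 c₂ x).deriv.symm
    obtain ⟨c₀, hc₀⟩ := hs.exists_eq_add_of_deriv_eq hs' (hf.differentiableOn (by norm_num))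
      (fun x _ => (hasDerivAt_quadratic 0 c₁ (c₂ / 2) x).differentiableAt.differentiableWithinAt)
      fun x hx => by
        rw [hc₁ hx, (hasDerivAt_quadratic 0 c₁ (c₂ / 2) x).deriv]
        ring
    exact ⟨c₀, c₁, c₂ / 2, fun x hx => by rw [hc₀ hx]; ring⟩
  · rintro ⟨a, b, c, hq⟩ x hx
    have h₁ : EqOn (iteratedDeriv 1 fun y => a + b * y + c * y ^ 2)
        (fun y => b + 2 * c * y) univ :=
      isOpen_univ.eqOn_iteratedDeriv_succ_of_hasDerivAt (by simp [EqOn])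
        fun y _ => hasDerivAt_quadratic a b c y
    have h₂ := isOpen_univ.eqOn_iteratedDeriv_succ_of_hasDerivAt h₁
      fun y _ => hasDerivAt_linear b (2 * c) y
    have h₃ := isOpen_univ.eqOn_iteratedDeriv_succ_of_hasDerivAt h₂
      fun y _ => hasDerivAt_const y (2 * c)
    rw [iteratedDerivWithin_congr hq hx, iteratedDerivWithin_of_isOpen hs hx, h₃ (mem_univ x)]

theorem IsOpen.hasDerivAt_sq_sub_one_sq_mul_iteratedDerivWithin_three (hs : IsOpen s)
    {Q : ℝ → ℝ} (hQ : ContDiffOn ℝ 4 Q s) {x : ℝ} (hx : x ∈ s) :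
    HasDerivAt (fun y => (y ^ 2 - 1) ^ 2 * iteratedDerivWithin 3 Q s y)
      ((x ^ 2 - 1) * ((x ^ 2 - 1) * iteratedDerivWithin 4 Q s x +
        4 * x * iteratedDerivWithin 3 Q s x)) x := by
  have hw : HasDerivAt (fun y : ℝ => (y ^ 2 - 1) ^ 2) (2 * (x ^ 2 - 1) * (2 * x)) x := by
    refine (((hasDerivAt_pow 2 x).sub_const 1).pow 2).congr_deriv ?_
    norm_num
  refine (hw.mul (hs.hasDerivAt_iteratedDerivWithin hQ (m := 3) (by norm_num) hx)).congr_deriv ?_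
  ring

theorem IsOpen.forall_sq_sub_one_mul_iteratedDerivWithin_four_add_eq_zero_iff (hs : IsOpen s)
    (hs' : IsPreconnected s) (hs₁ : ∀ x ∈ s, x ^ 2 - 1 ≠ 0) {Q : ℝ → ℝ}
    (hQ : ContDiffOn ℝ 4 Q s) :
    (∀ x ∈ s,
        (x ^ 2 - 1) * iteratedDerivWithin 4 Q s x + 4 * x * iteratedDerivWithin 3 Q s x = 0) ↔
      ∃ k : ℝ, ∀ x ∈ s, (x ^ 2 - 1) ^ 2 * iteratedDerivWithin 3 Q s x = k := by
  have hG := fun x (hx : x ∈ s) => hs.hasDerivAt_sq_sub_one_sq_mul_iteratedDerivWithin_three hQ hx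
  constructor
  · intro h
    refine hs.exists_is_const_of_deriv_eq_zero hs'
      (fun x hx => (hG x hx).differentiableAt.differentiableWithinAt) fun x hx => ?_
    rw [(hG x hx).deriv, h x hx, mul_zero, Pi.zero_apply]
  · rintro ⟨k, hk⟩ x hx
    have hconst : HasDerivAt (fun y => (y ^ 2 - 1) ^ 2 * iteratedDerivWithin 3 Q s y) 0 x :=
      (hasDerivAt_const x k).congr_of_eventuallyEq (Filter.eventually_of_mem (hs.mem_nhds hx) hk)
    exact (mul_eq_zero.mp ((hG x hx).unique hconst)).resolve_left (hs₁ x hx)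

noncomputable def logSolution (x : ℝ) : ℝ :=
  (2 * x ^ 2 - 2) * Real.log ((1 - x) / (1 + x)) - 4 * x

theorem one_sub_ne_zero_and_one_add_ne_zero {x : ℝ} (hx : x ^ 2 - 1 ≠ 0) :
    1 - x ≠ 0 ∧ 1 + x ≠ 0 := by
  rw [← mul_ne_zero_iff]
  contrapose! hx
  linear_combination -hx

theorem hasDerivAt_log_one_sub_div_one_add {x : ℝ} (hx : x ^ 2 - 1 ≠ 0) :
    HasDerivAt (fun y => Real.log ((1 - y) / (1 + y))) (2 / (x ^ 2 - 1)) x := by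
  obtain ⟨h₁, h₂⟩ := one_sub_ne_zero_and_one_add_ne_zero hx
  have hq := ((hasDerivAt_id' x).const_sub 1).fun_div ((hasDerivAt_id' x).const_add 1) h₂
  refine (hq.log (div_ne_zero h₁ h₂)).congr_deriv ?_
  field_simp
  ring

theorem contDiffOn_logSolution {n : WithTop ℕ∞} (hs₁ : ∀ x ∈ s, x ^ 2 - 1 ≠ 0) :
    ContDiffOn ℝ n logSolution s := by
  have h₂ : ∀ x ∈ s, 1 + x ≠ 0 := fun x hx =>
    (one_sub_ne_zero_and_one_add_ne_zero (hs₁ x hx)).2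
  have hq : ∀ x ∈ s, (1 - x) / (1 + x) ≠ 0 := fun x hx =>
    div_ne_zero (one_sub_ne_zero_and_one_add_ne_zero (hs₁ x hx)).1 (h₂ x hx)
  unfold logSolution
  fun_prop (disch := assumption)

theorem IsOpen.iteratedDerivWithin_three_logSolution (hs : IsOpen s)
    (hs₁ : ∀ x ∈ s, x ^ 2 - 1 ≠ 0) {x : ℝ} (hx : x ∈ s) :
    iteratedDerivWithin 3 logSolution s x = -16 / (x ^ 2 - 1) ^ 2 := by
  have hL := fun y (hy : y ∈ s) => hasDerivAt_log_one_sub_div_one_add (hs₁ y hy)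
  have h₁ : EqOn (iteratedDeriv 1 logSolution)
      (fun y => 4 * y * Real.log ((1 - y) / (1 + y))) s := by
    refine hs.eqOn_iteratedDeriv_succ_of_hasDerivAt (g := logSolution) (by simp [EqOn])
      fun y hy => ?_
    have hp : HasDerivAt (fun y : ℝ => 2 * y ^ 2 - 2) (4 * y) y := by
      refine (((hasDerivAt_pow 2 y).const_mul 2).sub_const 2).congr_deriv ?_
      norm_num
      ring
    refine ((hp.mul (hL y hy)).sub ((hasDerivAt_id' y).const_mul 4)).congr_deriv ?_
    have := hs₁ y hy
    field_simp
    ring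
  have h₂ : EqOn (iteratedDeriv 2 logSolution)
      (fun y => 4 * Real.log ((1 - y) / (1 + y)) + 8 * y / (y ^ 2 - 1)) s := by
    refine hs.eqOn_iteratedDeriv_succ_of_hasDerivAt h₁ fun y hy => ?_
    refine (((hasDerivAt_id' y).const_mul 4).mul (hL y hy)).congr_deriv ?_
    have := hs₁ y hy
    field_simp
    ring
  have h₃ : EqOn (iteratedDeriv 3 logSolution) (fun y => -16 / (y ^ 2 - 1) ^ 2) s := by
    refine hs.eqOn_iteratedDeriv_succ_of_hasDerivAt h₂ fun y hy => ?_
    have hw : HasDerivAt (fun y : ℝ => y ^ 2 - 1) (2 * y) y := by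
      refine ((hasDerivAt_pow 2 y).sub_const 1).congr_deriv ?_
      norm_num
    have hq := ((hasDerivAt_id' y).const_mul 8).fun_div hw (hs₁ y hy)
    refine (((hL y hy).const_mul 4).add hq).congr_deriv ?_
    have := hs₁ y hy
    field_simp
    ring
  rw [iteratedDerivWithin_of_isOpen hs hx, h₃ hx]

theorem IsOpen.sq_sub_one_sq_mul_iteratedDerivWithin_three_sub_mul_logSolution (hs : IsOpen s)
    (hs₁ : ∀ x ∈ s, x ^ 2 - 1 ≠ 0) {Q : ℝ → ℝ} (hQ : ContDiffOn ℝ 3 Q s) (c : ℝ) {x : ℝ}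
    (hx : x ∈ s) :
    (x ^ 2 - 1) ^ 2 * iteratedDerivWithin 3 (fun y => Q y - c * logSolution y) s x =
      (x ^ 2 - 1) ^ 2 * iteratedDerivWithin 3 Q s x + 16 * c := by
  have hF : ContDiffWithinAt ℝ 3 (fun y => c * logSolution y) s x :=
    (contDiffOn_logSolution hs₁ x hx).const_smul c
  rw [show (fun y => Q y - c * logSolution y) = Q - fun y => c * logSolution y from rfl,
    iteratedDerivWithin_sub hx hs.uniqueDiffOn (hQ x hx) hF, iteratedDerivWithin_const_mul_field,
    hs.iteratedDerivWithin_three_logSolution hs₁ hx]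
  have := hs₁ x hx
  field_simp
  ring

theorem IsOpen.exists_sq_sub_one_sq_mul_iteratedDerivWithin_three_eq_iff (hs : IsOpen s)
    (hs₁ : ∀ x ∈ s, x ^ 2 - 1 ≠ 0) {Q : ℝ → ℝ} (hQ : ContDiffOn ℝ 3 Q s) :
    (∃ k : ℝ, ∀ x ∈ s, (x ^ 2 - 1) ^ 2 * iteratedDerivWithin 3 Q s x = k) ↔
      ∃ c : ℝ, ∀ x ∈ s, iteratedDerivWithin 3 (fun y => Q y - c * logSolution y) s x = 0 := by
  have hweight := hs.sq_sub_one_sq_mul_iteratedDerivWithin_three_sub_mul_logSolution hs₁ hQ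
  constructor
  · rintro ⟨k, hk⟩
    refine ⟨-k / 16, fun x hx => ?_⟩
    have := hweight (-k / 16) hx
    rw [hk x hx] at this
    exact (mul_eq_zero.mp (by linarith)).resolve_left (pow_ne_zero 2 (hs₁ x hx))
  · rintro ⟨c, hc⟩
    refine ⟨-16 * c, fun x hx => ?_⟩
    have := hweight c hx
    rw [hc x hx, mul_zero] at this
    linarith

end

/-- A function `Q`, four times continuously differentiable on `(−1,1)`, satisfies
`(x²−1)Q⁗(x) + 4x Q‴(x) = 0` on `(−1,1)` iff
`Q(x) = c₁[(2x²−2)log((1−x)/(1+x)) − 4x] + c₂ + c₃x + c₄x²` for some constants. -/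
theorem stmt6 (Q : ℝ → ℝ) (hQ : ContDiffOn ℝ 4 Q (Set.Ioo (-1 : ℝ) 1)) :
    (∀ x ∈ Set.Ioo (-1 : ℝ) 1,
        (x ^ 2 - 1) * iteratedDerivWithin 4 Q (Set.Ioo (-1 : ℝ) 1) x +
            4 * x * iteratedDerivWithin 3 Q (Set.Ioo (-1 : ℝ) 1) x = 0) ↔
      (∃ c₁ c₂ c₃ c₄ : ℝ, ∀ x ∈ Set.Ioo (-1 : ℝ) 1,
        Q x = c₁ * ((2 * x ^ 2 - 2) * Real.log ((1 - x) / (1 + x)) - 4 * x) +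
            c₂ + c₃ * x + c₄ * x ^ 2) := by
  have hI₁ : ∀ x ∈ Ioo (-1 : ℝ) 1, x ^ 2 - 1 ≠ 0 := fun x ⟨h₁, h₂⟩ => by nlinarith
  have hQ₃ : ContDiffOn ℝ 3 Q (Ioo (-1) 1) := hQ.of_le (by norm_num)
  rw [isOpen_Ioo.forall_sq_sub_one_mul_iteratedDerivWithin_four_add_eq_zero_iff
      isPreconnected_Ioo hI₁ hQ,
    isOpen_Ioo.exists_sq_sub_one_sq_mul_iteratedDerivWithin_three_eq_iff hI₁ hQ₃]
  calc (∃ c : ℝ, ∀ x ∈ Ioo (-1 : ℝ) 1,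
          iteratedDerivWithin 3 (fun y => Q y - c * logSolution y) (Ioo (-1) 1) x = 0)
      ↔ ∃ c a b d : ℝ, ∀ x ∈ Ioo (-1 : ℝ) 1,
          Q x - c * logSolution x = a + b * x + d * x ^ 2 :=
        exists_congr fun c => isOpen_Ioo.iteratedDerivWithin_three_eq_zero_iff isPreconnected_Ioo
          (hQ₃.sub ((contDiffOn_logSolution hI₁).const_smul c))
    _ ↔ _ := by simp only [logSolution, sub_eq_iff_eq_add', ← add_assoc]
end

section
/- Let a, b, K : ℤ → ℝ with K(n) = a(n+3)·K(n+4) + b(n+2)·K(n+3) for all n ∈ ℤ, and let u : ℤ → ℝ satisfy u(n+4) = a(n)·u(n) + b(n)·u(n+1) for all n ∈ ℤ. Then the function φ(n) = a(n)·K(n+1)·u(n) + K(n−2)·u(n+1) + K(n−1)·u(n+2) + K(n)·u(n+3) is a first integral: φ(n+1) = φ(n) for all n ∈ ℤ. -/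
/-- If `K(n) = a(n+3)K(n+4) + b(n+2)K(n+3)` and `u` solves `u(n+4) = a(n)u(n) + b(n)u(n+1)`,
then `φ(n) = a(n)K(n+1)u(n) + K(n−2)u(n+1) + K(n−1)u(n+2) + K(n)u(n+3)` is a first
integral: `φ(n+1) = φ(n)` for all `n ∈ ℤ`. -/
theorem stmt8 (a b K u : ℤ → ℝ)
    (hK : ∀ n : ℤ, K n = a (n + 3) * K (n + 4) + b (n + 2) * K (n + 3))
    (hu : ∀ n : ℤ, u (n + 4) = a n * u n + b n * u (n + 1)) :
    let φ : ℤ → ℝ := fun n =>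
      a n * K (n + 1) * u n + K (n - 2) * u (n + 1) + K (n - 1) * u (n + 2) + K n * u (n + 3)
    ∀ n : ℤ, φ (n + 1) = φ n := by
  intro φ n
  have hK' : K (n - 2) = a (n + 1) * K (n + 2) + b n * K (n + 1) := by
    simpa only [show n - 2 + 3 = n + 1 by ring, show n - 2 + 4 = n + 2 by ring,
      show n - 2 + 2 = n by ring] using hK (n - 2)
  simp only [φ, show n + 1 + 1 = n + 2 by ring, show n + 1 + 2 = n + 3 by ring,
    show n + 1 + 3 = n + 4 by ring, show n + 1 - 2 = n - 1 by ring, add_sub_cancel_right]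
  linear_combination K (n + 1) * hu n - u (n + 1) * hK'
end

section
/- Let u : ℕ → ℝ satisfy (n+4)·u(n+4) = n·u(n) for all n ∈ ℕ. Then each of the four functions φ₁(n) = (1/3)[n·u(n) + (n+1)·u(n+1) + (n+2)·u(n+2) + (n+3)·u(n+3)], φ₂(n) = ((−1)^n/3)[−n·u(n) + (n+1)·u(n+1) − (n+2)·u(n+2) + (n+3)·u(n+3)], φ₃(n) = (1/3)[−n·sin(nπ/2)·u(n) − (n+1)·cos(nπ/2)·u(n+1) + (n+2)·sin(nπ/2)·u(n+2) + (n+3)·cos(nπ/2)·u(n+3)], φ₄(n) = (1/3)[n·cos(nπ/2)·u(n) − (n+1)·sin(nπ/2)·u(n+1) − (n+2)·cos(nπ/2)·u(n+2) + (n+3)·sin(nπ/2)·u(n+3)] is a first integral: φᵢ(n+1) = φᵢ(n) for all n ∈ ℕ and i = 1,2,3,4. -/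
/-!
Put `v m = m · u(m)`; the recurrence says exactly that `v` has period 4. Each `φᵢ` is one third
of a sum `∑_{k<4} w(n+k)` of four consecutive values of `w = c · v` for a coefficient sequence
`c` of period 4 (namely `1`, `(-1)^(m+1)`, `-sin(mπ/2)`, `cos(mπ/2)`), and a sum of `p`
consecutive values of a `p`-periodic sequence does not depend on where it starts.
-/

open Real Finset Function

theorem Function.Periodic.sum_range_add_one_add {M : Type*} [AddCancelCommMonoid M]
    {w : ℕ → M} {p : ℕ} (hw : Periodic w p) (n : ℕ) :
    ∑ k ∈ range p, w (n + 1 + k) = ∑ k ∈ range p, w (n + k) := by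
  have hsplit := sum_range_succ' (fun k => w (n + k)) p
  rw [sum_range_succ, add_zero, hw n] at hsplit
  simp only [add_right_comm n 1, add_assoc n] at hsplit ⊢
  exact (add_right_cancel hsplit).symm

theorem Function.Periodic.eq_of_eq_mul_sum_range {R : Type*} [Mul R] [AddCancelCommMonoid R]
    {w : ℕ → R} {p : ℕ} (hw : Periodic w p) {φ : ℕ → R} (c : R)
    (hφ : ∀ m, φ m = c * ∑ k ∈ range p, w (m + k)) (n : ℕ) : φ (n + 1) = φ n := by
  rw [hφ, hφ, hw.sum_range_add_one_add]

theorem sin_natCast_add_one_mul_pi_div_two (m : ℕ) :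
    sin (((m + 1 : ℕ) : ℝ) * π / 2) = cos (m * π / 2) := by
  rw [← sin_add_pi_div_two]
  congr 1
  push_cast
  ring

theorem cos_natCast_add_one_mul_pi_div_two (m : ℕ) :
    cos (((m + 1 : ℕ) : ℝ) * π / 2) = -sin (m * π / 2) := by
  rw [← cos_add_pi_div_two]
  congr 1
  push_cast
  ring

theorem periodic_sin_natCast_mul_pi_div_two : Periodic (fun m : ℕ => sin (m * π / 2)) 4 := by
  intro m
  simp only [Nat.cast_add, Nat.cast_ofNat]
  rw [show ((m : ℝ) + 4) * π / 2 = m * π / 2 + 2 * π by ring, sin_add_two_pi]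

theorem periodic_cos_natCast_mul_pi_div_two : Periodic (fun m : ℕ => cos (m * π / 2)) 4 := by
  intro m
  simp only [Nat.cast_add, Nat.cast_ofNat]
  rw [show ((m : ℝ) + 4) * π / 2 = m * π / 2 + 2 * π by ring, cos_add_two_pi]

theorem periodic_neg_one_pow : Periodic (fun m : ℕ => (-1 : ℝ) ^ m) 4 := by
  intro m
  norm_num [pow_add]

/-- For any solution of `(n+4)·u(n+4) = n·u(n)`, each of the four stated functions is a
first integral: `φᵢ(n+1) = φᵢ(n)` for all `n`. -/
theorem stmt12 (u : ℕ → ℝ) (hu : ∀ n : ℕ, ((n : ℝ) + 4) * u (n + 4) = (n : ℝ) * u n) :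
    let φ₁ : ℕ → ℝ := fun n => (1 / 3) *
      ((n : ℝ) * u n + ((n : ℝ) + 1) * u (n + 1) + ((n : ℝ) + 2) * u (n + 2) +
        ((n : ℝ) + 3) * u (n + 3))
    let φ₂ : ℕ → ℝ := fun n => ((-1 : ℝ) ^ n / 3) *
      (-(n : ℝ) * u n + ((n : ℝ) + 1) * u (n + 1) - ((n : ℝ) + 2) * u (n + 2) +
        ((n : ℝ) + 3) * u (n + 3))
    let φ₃ : ℕ → ℝ := fun n => (1 / 3) *
      (-(n : ℝ) * Real.sin ((n : ℝ) * π / 2) * u n -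
        ((n : ℝ) + 1) * Real.cos ((n : ℝ) * π / 2) * u (n + 1) +
        ((n : ℝ) + 2) * Real.sin ((n : ℝ) * π / 2) * u (n + 2) +
        ((n : ℝ) + 3) * Real.cos ((n : ℝ) * π / 2) * u (n + 3))
    let φ₄ : ℕ → ℝ := fun n => (1 / 3) *
      ((n : ℝ) * Real.cos ((n : ℝ) * π / 2) * u n -
        ((n : ℝ) + 1) * Real.sin ((n : ℝ) * π / 2) * u (n + 1) -
        ((n : ℝ) + 2) * Real.cos ((n : ℝ) * π / 2) * u (n + 2) +
        ((n : ℝ) + 3) * Real.sin ((n : ℝ) * π / 2) * u (n + 3))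
    ∀ n : ℕ, φ₁ (n + 1) = φ₁ n ∧ φ₂ (n + 1) = φ₂ n ∧ φ₃ (n + 1) = φ₃ n ∧ φ₄ (n + 1) = φ₄ n := by
  intro φ₁ φ₂ φ₃ φ₄ n
  set v : ℕ → ℝ := fun m => m * u m
  have hv : Periodic v 4 := fun m => by simpa [v] using hu m
  have h₁ : ∀ m, φ₁ m = (1 / 3) * ∑ k ∈ range 4, v (m + k) := fun m => by
    simp only [φ₁, v, sum_range_succ, sum_range_zero, zero_add, add_zero]
    push_cast
    ring
  have h₂ : ∀ m, φ₂ m = -(1 / 3) * ∑ k ∈ range 4, (-1 : ℝ) ^ (m + k) * v (m + k) :=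
    fun m => by
    simp only [φ₂, v, sum_range_succ, sum_range_zero, zero_add, add_zero, pow_succ]
    push_cast
    ring
  have h₃₄ : ∀ m,
      φ₃ m = -(1 / 3) * ∑ k ∈ range 4, sin ((m + k : ℕ) * π / 2) * v (m + k) ∧
      φ₄ m = (1 / 3) * ∑ k ∈ range 4, cos ((m + k : ℕ) * π / 2) * v (m + k) := fun m => by
    simp only [φ₃, φ₄, v, sum_range_succ, sum_range_zero, zero_add, add_zero,
      show m + 3 = m + 1 + 1 + 1 from rfl, show m + 2 = m + 1 + 1 from rfl,
      sin_natCast_add_one_mul_pi_div_two, cos_natCast_add_one_mul_pi_div_two]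
    push_cast
    constructor <;> ring
  exact ⟨hv.eq_of_eq_mul_sum_range _ h₁ n,
    (periodic_neg_one_pow.mul hv).eq_of_eq_mul_sum_range _ h₂ n,
    (periodic_sin_natCast_mul_pi_div_two.mul hv).eq_of_eq_mul_sum_range _
      (fun m => (h₃₄ m).1) n,
    (periodic_cos_natCast_mul_pi_div_two.mul hv).eq_of_eq_mul_sum_range _
      (fun m => (h₃₄ m).2) n⟩
end

section
/- For every sequence u : ℕ → ℝ (no solution assumption) and every n ∈ ℕ, the functions Φ₁(n) = (1/3)[n·u(n) + (n+1)·u(n+1) + (n+2)·u(n+2) + (n+3)·u(n+3)], Φ₂(n) = ((−1)^n/3)[−n·u(n) + (n+1)·u(n+1) − (n+2)·u(n+2) + (n+3)·u(n+3)], Φ₃(n) = (1/3)[−n·sin(nπ/2)·u(n) − (n+1)·cos(nπ/2)·u(n+1) + (n+2)·sin(nπ/2)·u(n+2) + (n+3)·cos(nπ/2)·u(n+3)], Φ₄(n) = (1/3)[n·cos(nπ/2)·u(n) − (n+1)·sin(nπ/2)·u(n+1) − (n+2)·cos(nπ/2)·u(n+2) + (n+3)·sin(nπ/2)·u(n+3)]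 satisfy the multiplier identities Φ₁(n+1) − Φ₁(n) = ((n+4)/3)·(u(n+4) − (n/(n+4))·u(n)), Φ₂(n+1) − Φ₂(n) = ((−1)^{n+1}(n+4)/3)·(u(n+4) − (n/(n+4))·u(n)), Φ₃(n+1) − Φ₃(n) = (−((n+4)/3)·sin(nπ/2))·(u(n+4) − (n/(n+4))·u(n)), Φ₄(n+1) − Φ₄(n) = (((n+4)/3)·cos(nπ/2))·(u(n+4) − (n/(n+4))·u(n)). -/
/-! With `w k = k · u k` the equation reads `w (n + 4) = w n`, and `(n + 4)` times its residual
is `w (n + 4) - w n`. For every 4-periodic `c`, the window sum `Φ n = ∑_{j<4} c (n+j) w (n+j)`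
telescopes to `Φ (n + 1) - Φ n = c n · (w (n + 4) - w n)`, so `(n + 4) c n` is a multiplier.
The four conserved quantities are the cases `c = 1/3`, `(-1)^(n+1)/3`, `-sin (nπ/2)/3` and
`cos (nπ/2)/3`, the real forms of the fourth roots of unity. -/

open Real Finset Function

theorem sum_range_add_one_sub_sum_range {G : Type*} [AddCommGroup G] (v : ℕ → G) (m n : ℕ) :
    ∑ j ∈ range m, v (n + 1 + j) - ∑ j ∈ range m, v (n + j) = v (n + m) - v n := by
  rw [← sum_sub_distrib]
  simpa [add_assoc, add_comm 1] using sum_range_sub (fun j => v (n + j)) m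

theorem sub_eq_multiplier_mul_of_eq_window_sum {K : Type*} [Field K] [CharZero K]
    {c : ℕ → K} (hc : Periodic c 4) (u : ℕ → K) {Φ : ℕ → K}
    (hΦ : ∀ k, Φ k = ∑ j ∈ range 4, c (k + j) * ((k + j : ℕ) * u (k + j))) (n : ℕ) :
    Φ (n + 1) - Φ n = c n * ((n : K) + 4) * (u (n + 4) - (n : K) / ((n : K) + 4) * u n) := by
  have h4 : (n : K) + 4 ≠ 0 := by exact_mod_cast Nat.succ_ne_zero (n + 3)
  rw [hΦ, hΦ, sum_range_add_one_sub_sum_range (fun k => c k * ((k : K) * u k)), hc n]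
  field_simp
  push_cast
  ring

theorem sin_add_one_mul_pi_div_two (x : ℝ) : sin ((x + 1) * π / 2) = cos (x * π / 2) := by
  rw [← sin_add_pi_div_two]; ring_nf

theorem cos_add_one_mul_pi_div_two (x : ℝ) : cos ((x + 1) * π / 2) = -sin (x * π / 2) := by
  rw [← cos_add_pi_div_two]; ring_nf

theorem periodic_nat_mul_pi_div_two {f : ℝ → ℝ} (hf : Periodic f (2 * π)) :
    Periodic (fun n : ℕ => f (n * π / 2)) 4 := by
  intro n
  simp only [Nat.cast_add, Nat.cast_ofNat]
  rw [show ((n : ℝ) + 4) * π / 2 = n * π / 2 + 2 * π by ring, hf]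

/-- For every sequence `u` (no solution assumption), the four first integrals of
`u(n+4) = (n/(n+4))·u(n)` satisfy the multiplier identities
`(S − id)Φ = Λ(n)·(u(n+4) − (n/(n+4))·u(n))` with multipliers
`(n+4)/3`, `(−1)^{n+1}(n+4)/3`, `−((n+4)/3)sin(nπ/2)`, `((n+4)/3)cos(nπ/2)`. -/
theorem stmt14 (u : ℕ → ℝ) :
    let Φ₁ : ℕ → ℝ := fun n => (1 / 3) *
      ((n : ℝ) * u n + ((n : ℝ) + 1) * u (n + 1) + ((n : ℝ) + 2) * u (n + 2) +
        ((n : ℝ) + 3) * u (n + 3))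
    let Φ₂ : ℕ → ℝ := fun n => ((-1 : ℝ) ^ n / 3) *
      (-(n : ℝ) * u n + ((n : ℝ) + 1) * u (n + 1) - ((n : ℝ) + 2) * u (n + 2) +
        ((n : ℝ) + 3) * u (n + 3))
    let Φ₃ : ℕ → ℝ := fun n => (1 / 3) *
      (-(n : ℝ) * Real.sin ((n : ℝ) * π / 2) * u n -
        ((n : ℝ) + 1) * Real.cos ((n : ℝ) * π / 2) * u (n + 1) +
        ((n : ℝ) + 2) * Real.sin ((n : ℝ) * π / 2) * u (n + 2) +
        ((n : ℝ) + 3) * Real.cos ((n : ℝ) * π / 2) * u (n + 3))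
    let Φ₄ : ℕ → ℝ := fun n => (1 / 3) *
      ((n : ℝ) * Real.cos ((n : ℝ) * π / 2) * u n -
        ((n : ℝ) + 1) * Real.sin ((n : ℝ) * π / 2) * u (n + 1) -
        ((n : ℝ) + 2) * Real.cos ((n : ℝ) * π / 2) * u (n + 2) +
        ((n : ℝ) + 3) * Real.sin ((n : ℝ) * π / 2) * u (n + 3))
    ∀ n : ℕ,
      Φ₁ (n + 1) - Φ₁ n =
        ((n : ℝ) + 4) / 3 * (u (n + 4) - (n : ℝ) / ((n : ℝ) + 4) * u n) ∧
      Φ₂ (n + 1) - Φ₂ n =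
        (-1 : ℝ) ^ (n + 1) * ((n : ℝ) + 4) / 3 *
          (u (n + 4) - (n : ℝ) / ((n : ℝ) + 4) * u n) ∧
      Φ₃ (n + 1) - Φ₃ n =
        -(((n : ℝ) + 4) / 3 * Real.sin ((n : ℝ) * π / 2)) *
          (u (n + 4) - (n : ℝ) / ((n : ℝ) + 4) * u n) ∧
      Φ₄ (n + 1) - Φ₄ n =
        ((n : ℝ) + 4) / 3 * Real.cos ((n : ℝ) * π / 2) *
          (u (n + 4) - (n : ℝ) / ((n : ℝ) + 4) * u n) := by
  intro Φ₁ Φ₂ Φ₃ Φ₄ n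
  have h₁ := sub_eq_multiplier_mul_of_eq_window_sum (c := fun _ => 1 / 3)
    (fun _ => rfl) u (Φ := Φ₁) ?_ n
  have h₂ := sub_eq_multiplier_mul_of_eq_window_sum (c := fun k => (-1) ^ (k + 1) / 3)
    (fun _ => by ring) u (Φ := Φ₂) ?_ n
  have h₃ := sub_eq_multiplier_mul_of_eq_window_sum (c := fun k => -sin (k * π / 2) / 3)
    (periodic_nat_mul_pi_div_two (sin_periodic.comp (fun y => -y / 3))) u (Φ := Φ₃) ?_ n
  have h₄ := sub_eq_multiplier_mul_of_eq_window_sum (c := fun k => cos (k * π / 2) / 3)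
    (periodic_nat_mul_pi_div_two (cos_periodic.comp (· / 3))) u (Φ := Φ₄) ?_ n
  · exact ⟨by rw [h₁]; ring, by rw [h₂]; ring, by rw [h₃]; ring, by rw [h₄]; ring⟩
  all_goals
    intro k
    simp only [sum_range_succ, sum_range_zero, Φ₁, Φ₂, Φ₃, Φ₄]
    push_cast
    -- so that the one-step shift lemmas can be applied repeatedly
    rw [show (k : ℝ) + 2 = k + 1 + 1 by ring, show (k : ℝ) + 3 = k + 1 + 1 + 1 by ring]
    simp only [add_zero, sin_add_one_mul_pi_div_two, cos_add_one_mul_pi_div_two, neg_neg]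
    ring
end
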